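/- Let κ be a measurable cardinal and U a normal κ-complete ultrafilter on κ. Then for every k ≥ 1, the sets [A]^k for A ∈ U form a base of the symmetric product ultrafilter [⊗^k U] on [κ]^k; that is, every member of [⊗^k U] contains [A]^k for some A ∈ U. -/

import Mathlib

open Cardinal Ordinal Filter Set

/-- The symmetric product of filters, defined recursively by peeling off the *last* factor;
the list argument is the list of factors in reverse order (last factor first). -/
def symFam {T : Type*} [LinearOrder T] : List (Filter T) → Set (Set (Finset T))
  | [] => ∅
  | [F] => {A | {b : T | {b} ∈ A} ∈ F}
  | F :: G :: Gs =>
      {A | {s : Finset T | {b : T | (∀ x ∈ s, x < b) ∧ insert b s ∈ A} ∈ F} ∈ symFam (G :: Gs)}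

/-!
Induction on `k`. Given `W ∈ [⊗^(k+1) U]`, the induction hypothesis yields `A₀ ∈ U` such that
for every `k`-set `s ⊆ A₀` the set `B s` of admissible top elements `b > max s` with
`s ∪ {b} ∈ W` lies in `U`. Normality together with `κ`-completeness makes the diagonal
intersection of the `B s` over all finite `s` a member of `U` (there are fewer than `κ` finite
sets below any given point), and its intersection with `A₀` is the required `A`: a
`(k+1)`-set `t` from it splits as `t = (t \ {max t}) ∪ {max t}` with `max t ∈ B (t \ {max t})`.
-/

universe u

theorem Cardinal.mk_finset_lt {α : Type u} {κ : Cardinal.{u}} (hκ : ℵ₀ ≤ κ) (hα : #α < κ) :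
    #(Finset α) < κ := by
  cases finite_or_infinite α
  · exact (lt_aleph0_of_finite _).trans_le hκ
  · rwa [mk_finset_of_infinite]

theorem Cardinal.mk_finset_forall_le_lt {T : Type u} [LinearOrder T] {κ : Cardinal.{u}}
    (hκ : ℵ₀ ≤ κ) {a : T} (ha : #(Iic a) < κ) :
    #{s : Finset T | ∀ x ∈ s, x ≤ a} < κ :=
  (mk_congr (Equiv.finsetSubtypeComm (· ≤ a))).symm.trans_lt (mk_finset_lt hκ ha)

namespace Filter

variable {T : Type u} [LinearOrder T]

def IsNormal (F : Filter T) : Prop :=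
  ∀ X : T → Set T, (∀ a, X a ∈ F) → {a | ∀ b < a, a ∈ X b} ∈ F

variable {F : Filter T} {κ : Cardinal.{u}} [CardinalInterFilter F κ]

theorem IsNormal.setOf_forall_finset_mem (hF : F.IsNormal) (hκ : ℵ₀ ≤ κ)
    (hIic : ∀ a : T, #(Iic a) < κ) {X : Finset T → Set T} (hX : ∀ s, X s ∈ F) :
    {b | ∀ s : Finset T, (∀ x ∈ s, x < b) → b ∈ X s} ∈ F := by
  set Y : T → Set T := fun a => ⋂ s ∈ {s : Finset T | ∀ x ∈ s, x ≤ a}, X s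
  have hY : ∀ a, Y a ∈ F := fun a =>
    (cardinal_bInter_mem (mk_finset_forall_le_lt hκ (hIic a))).2 fun s _ => hX s
  filter_upwards [hX ∅, hF Y hY] with b hb_empty hbY s hs
  rcases s.eq_empty_or_nonempty with rfl | hne
  · exact hb_empty
  · exact mem_iInter₂.1 (hbY _ (hs _ (s.max'_mem hne))) s fun x hx => s.le_max' x hx

theorem IsNormal.exists_forall_card_eq_succ_mem (hF : F.IsNormal) (hκ : ℵ₀ ≤ κ)
    (hIic : ∀ a : T, #(Iic a) < κ) {n : ℕ} {W : Set (Finset T)} {A₀ : Set T} (hA₀ : A₀ ∈ F)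
    (hA₀W : {s : Finset T | s.card = n ∧ ∀ x ∈ s, x ∈ A₀} ⊆
      {s | {b | (∀ x ∈ s, x < b) ∧ insert b s ∈ W} ∈ F}) :
    ∃ A ∈ F, {t : Finset T | t.card = n + 1 ∧ ∀ x ∈ t, x ∈ A} ⊆ W := by
  have hX : ∀ s : Finset T,
      {b | s.card = n → (∀ x ∈ s, x ∈ A₀) → (∀ x ∈ s, x < b) ∧ insert b s ∈ W} ∈ F := by
    intro s
    by_cases hs : s.card = n ∧ ∀ x ∈ s, x ∈ A₀
    · filter_upwards [hA₀W hs] with b hb _ _ using hb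
    · exact univ_mem' fun b hcard hsub => absurd ⟨hcard, hsub⟩ hs
  refine ⟨_, inter_mem hA₀ (hF.setOf_forall_finset_mem hκ hIic hX), ?_⟩
  rintro t ⟨ht, htA⟩
  have hne : t.Nonempty := Finset.card_pos.1 (by omega)
  have hmax := t.max'_mem hne
  have hinsert := ((htA _ hmax).2 (t.erase (t.max' hne))
    (fun x hx => t.lt_max'_of_mem_erase_max' hne hx)
    (by rw [Finset.card_erase_of_mem hmax, ht, Nat.add_sub_cancel])
    (fun x hx => (htA x (Finset.mem_of_mem_erase hx)).1)).2
  rwa [Finset.insert_erase hmax] at hinsert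

theorem IsNormal.exists_forall_card_eq_mem_of_mem_symFam (hF : F.IsNormal) (hκ : ℵ₀ ≤ κ)
    (hIic : ∀ a : T, #(Iic a) < κ) {k : ℕ} (hk : 1 ≤ k) :
    ∀ W ∈ symFam (List.replicate k F),
      ∃ A ∈ F, {s : Finset T | s.card = k ∧ ∀ x ∈ s, x ∈ A} ⊆ W := by
  induction k, hk using Nat.le_induction with
  | base =>
    intro W hW
    refine ⟨_, hW, fun s ⟨hs, hsA⟩ => ?_⟩
    obtain ⟨b, rfl⟩ := Finset.card_eq_one.mp hs
    exact hsA b (Finset.mem_singleton_self b)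
  | succ n hn ih =>
    intro W hW
    -- `symFam` unfolds only on a list of visible length at least two
    obtain ⟨j, rfl⟩ : ∃ j, n = j + 1 := ⟨n - 1, by omega⟩
    obtain ⟨A₀, hA₀, hA₀W⟩ := ih _ hW
    exact hF.exists_forall_card_eq_succ_mem hκ hIic hA₀ hA₀W

end Filter

theorem stmt_12_general (κ : Cardinal.{0}) (hκ : Cardinal.aleph0 < κ)
    (U : Ultrafilter κ.ord.ToType)
    (hcomplete : ∀ S : Set (Set κ.ord.ToType), #S < κ → (∀ s ∈ S, s ∈ U) → ⋂₀ S ∈ U)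
    (hnormal : ∀ X : κ.ord.ToType → Set κ.ord.ToType,
      (∀ a, X a ∈ U) → {a | ∀ b < a, a ∈ X b} ∈ U)
    (k : ℕ) (hk : 1 ≤ k) :
    ∀ W ∈ symFam (List.replicate k (U : Filter κ.ord.ToType)),
      ∃ A ∈ U, {s : Finset κ.ord.ToType | s.card = k ∧ ∀ x ∈ s, x ∈ A} ⊆ W := by
  have : CardinalInterFilter (U : Filter κ.ord.ToType) κ := ⟨hcomplete⟩
  have hIic (a : κ.ord.ToType) : #(Iic a) < κ := by
    simpa using mk_Iic_lt a (by simp) (by simpa using hκ.le)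
  exact IsNormal.exists_forall_card_eq_mem_of_mem_symFam hnormal hκ.le hIic hk

/-- For a normal κ-complete (nonprincipal) ultrafilter U on a measurable
cardinal κ and every k ≥ 1, the sets [A]^k, A ∈ U, form a base of the symmetric product
[⊗^k U]: every member of [⊗^k U] contains [A]^k for some A ∈ U. -/
theorem stmt_12 (κ : Cardinal.{0}) (hκ : Cardinal.aleph0 < κ)
    (U : Ultrafilter κ.ord.ToType)
    (hnonprincipal : ∀ x, U ≠ pure x)
    (hcomplete : ∀ S : Set (Set κ.ord.ToType), #S < κ → (∀ s ∈ S, s ∈ U) → ⋂₀ S ∈ U)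
    (hnormal : ∀ X : κ.ord.ToType → Set κ.ord.ToType,
      (∀ a, X a ∈ U) → {a | ∀ b < a, a ∈ X b} ∈ U)
    (k : ℕ) (hk : 1 ≤ k) :
    ∀ W ∈ symFam (List.replicate k (U : Filter κ.ord.ToType)),
      ∃ A ∈ U, {s : Finset κ.ord.ToType | s.card = k ∧ ∀ x ∈ s, x ∈ A} ⊆ W :=
  stmt_12_general κ hκ U hcomplete hnormal k hk
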